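/- arXiv:2107.10660 — 3 statements merged into one kernel-verified Lean document; each statement's English description precedes it below -/
import Mathlib

section
/- Let G be a connected simple graph that is not isomorphic to any of the following exceptional graphs: K_{2,l} for l ≥ 2, W_4 = K_1 ∨ C_4, E_2 ∨ C_4, 2K_2, P_5, the hammer, or the butterfly. Then G is a split graph if and only if G/e is a split graph for every edge e ∈ E(G). -/
open SimpleGraph

/-- Contraction of the edge between adjacent vertices `u` and `v`:
`v` is merged into `u`, so the vertex set is `V \ {v}`, and `u` inherits
the neighbours of `v`; loops and multiple edges are removed. -/
def SimpleGraph.contractEdge {V : Type*} (G : SimpleGraph V) (u v : V) :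
    SimpleGraph {x : V // x ≠ v} where
  Adj a b := a ≠ b ∧
    (G.Adj a.1 b.1 ∨ (a.1 = u ∧ G.Adj v b.1) ∨ (b.1 = u ∧ G.Adj v a.1))
  symm := by
    constructor
    rintro a b ⟨hab, h⟩
    refine ⟨hab.symm, ?_⟩
    rcases h with h | ⟨h1, h2⟩ | ⟨h1, h2⟩
    · exact Or.inl h.symm
    · exact Or.inr (Or.inr ⟨h1, h2⟩)
    · exact Or.inr (Or.inl ⟨h1, h2⟩)
  loopless := by constructor; rintro a ⟨hab, -⟩; exact hab rfl

/-- `G` contains an induced subgraph isomorphic to `H`. -/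
def SimpleGraph.HasInduced {V W : Type*} (G : SimpleGraph V) (H : SimpleGraph W) : Prop :=
  ∃ S : Set V, Nonempty (G.induce S ≃g H)

/-- A set of vertices is independent if its vertices are pairwise nonadjacent. -/
def SimpleGraph.IsIndependentSet {V : Type*} (G : SimpleGraph V) (S : Set V) : Prop :=
  S.Pairwise fun a b => ¬ G.Adj a b

/-- A graph is split if its vertex set partitions into a clique and an independent set. -/
def SimpleGraph.IsSplit {V : Type*} (G : SimpleGraph V) : Prop :=
  ∃ K S : Set V, K ∪ S = Set.univ ∧ Disjoint K S ∧ G.IsClique K ∧ G.IsIndependentSet S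

/-- `2K₂`: two disjoint edges. -/
def twoK2 : SimpleGraph (Fin 4) := fromEdgeSet {s(0,1), s(2,3)}

/-- The hammer: a triangle `0,1,2` with the path `2-3-4` of length two attached. -/
def hammerGraph : SimpleGraph (Fin 5) :=
  fromEdgeSet {s(0,1), s(0,2), s(1,2), s(2,3), s(3,4)}

/-- The butterfly: two triangles `0,1,2` and `2,3,4` sharing exactly the vertex `2`. -/
def butterflyGraph : SimpleGraph (Fin 5) :=
  fromEdgeSet {s(0,1), s(0,2), s(1,2), s(2,3), s(2,4), s(3,4)}

/-- The wheel `W₄ = K₁ ∨ C₄`: the vertex `4` joined to the 4-cycle `0-1-2-3`. -/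
def W4Graph : SimpleGraph (Fin 5) :=
  fromEdgeSet {s(0,1), s(1,2), s(2,3), s(3,0), s(4,0), s(4,1), s(4,2), s(4,3)}

/-- `E₂ ∨ C₄`: the two nonadjacent vertices `4, 5` each joined to the 4-cycle `0-1-2-3`. -/
def E2JoinC4Graph : SimpleGraph (Fin 6) :=
  fromEdgeSet {s(0,1), s(1,2), s(2,3), s(3,0),
    s(4,0), s(4,1), s(4,2), s(4,3), s(5,0), s(5,1), s(5,2), s(5,3)}

/-- `G` is one of the exceptional graphs of Figure 1: `K_{2,l}` (`l ≥ 2`),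
`W₄ = K₁ ∨ C₄`, `E₂ ∨ C₄`, `2K₂`, `P₅`, the hammer, or the butterfly. -/
def IsExceptional {V : Type*} (G : SimpleGraph V) : Prop :=
  (∃ l : ℕ, 2 ≤ l ∧ Nonempty (G ≃g completeBipartiteGraph (Fin 2) (Fin l))) ∨
  Nonempty (G ≃g W4Graph) ∨ Nonempty (G ≃g E2JoinC4Graph) ∨
  Nonempty (G ≃g twoK2) ∨ Nonempty (G ≃g pathGraph 5) ∨
  Nonempty (G ≃g hammerGraph) ∨ Nonempty (G ≃g butterflyGraph)

/-!
Split graphs are closed under edge contraction: the clique of a split partition of `G`, with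
the contracted vertex added, is the clique of a split partition of `G/uv`.

Conversely, by the Földes–Hammer theorem a graph without induced `2K₂`, `C₄` and `C₅` is split.
Contracting an edge of an induced `C₅` leaves an induced `C₄`, so no `C₅` survives when all
contractions are split. An induced `C₄` or `2K₂` must likewise be destroyed by every contraction,
in particular by contracting an edge that avoids it or that joins it to an outside vertex. This
forces the outside vertices to be pairwise nonadjacent and to attach to the configuration in a
rigid way, and connectivity then leaves only the exceptional graphs.
-/

namespace SimpleGraph

variable {V : Type*} {G : SimpleGraph V}

lemma isSplit_iff_exists_isClique_isIndependentSet_compl :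
    G.IsSplit ↔ ∃ K : Set V, G.IsClique K ∧ G.IsIndependentSet Kᶜ := by
  constructor
  · rintro ⟨K, S, hKS, hdisj, hK, hS⟩
    refine ⟨K, hK, hS.mono fun x hx => ?_⟩
    exact (hKS.ge (Set.mem_univ x)).resolve_left hx
  · rintro ⟨K, hK, hS⟩
    exact ⟨K, Kᶜ, Set.union_compl_self K, disjoint_compl_right, hK, hS⟩

lemma IsIndependentSet.mem_or_mem_of_adj {K : Set V} (hS : G.IsIndependentSet Kᶜ) {x y : V}
    (h : G.Adj x y) : x ∈ K ∨ y ∈ K := by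
  by_contra! hxy
  exact hS hxy.1 hxy.2 h.ne h

lemma IsClique.not_mem_or_not_mem {K : Set V} (hK : G.IsClique K) {x y : V} (hxy : x ≠ y)
    (h : ¬G.Adj x y) : x ∉ K ∨ y ∉ K := by
  by_contra! hK'
  exact h (hK hK'.1 hK'.2 hxy)

def IsInducedC4 (G : SimpleGraph V) (a b c d : V) : Prop :=
  G.Adj a b ∧ G.Adj b c ∧ G.Adj c d ∧ G.Adj d a ∧ ¬G.Adj a c ∧ ¬G.Adj b d ∧ a ≠ c ∧ b ≠ d

def IsInduced2K2 (G : SimpleGraph V) (a b c d : V) : Prop :=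
  G.Adj a b ∧ G.Adj c d ∧ ¬G.Adj a c ∧ ¬G.Adj a d ∧ ¬G.Adj b c ∧ ¬G.Adj b d ∧
    a ≠ c ∧ a ≠ d ∧ b ≠ c ∧ b ≠ d

def IsInducedC5 (G : SimpleGraph V) (a b c d e : V) : Prop :=
  G.Adj a b ∧ G.Adj b c ∧ G.Adj c d ∧ G.Adj d e ∧ G.Adj e a ∧
    ¬G.Adj a c ∧ ¬G.Adj b d ∧ ¬G.Adj c e ∧ ¬G.Adj d a ∧ ¬G.Adj e b ∧
    a ≠ c ∧ b ≠ d ∧ c ≠ e ∧ d ≠ a ∧ e ≠ b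

section Obstructions

variable {a b c d e : V}

lemma IsInducedC4.not_isSplit (h : G.IsInducedC4 a b c d) : ¬G.IsSplit := by
  obtain ⟨hab, hbc, hcd, hda, hac, hbd, ac, bd⟩ := h
  rw [isSplit_iff_exists_isClique_isIndependentSet_compl]
  rintro ⟨K, hK, hS⟩
  have := hS.mem_or_mem_of_adj hab; have := hS.mem_or_mem_of_adj hbc
  have := hS.mem_or_mem_of_adj hcd; have := hS.mem_or_mem_of_adj hda
  have := hK.not_mem_or_not_mem ac hac; have := hK.not_mem_or_not_mem bd hbd
  tauto

lemma IsInduced2K2.not_isSplit (h : G.IsInduced2K2 a b c d) : ¬G.IsSplit := by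
  obtain ⟨hab, hcd, hac, had, hbc, hbd, ac, ad, bc, bd⟩ := h
  rw [isSplit_iff_exists_isClique_isIndependentSet_compl]
  rintro ⟨K, hK, hS⟩
  have := hS.mem_or_mem_of_adj hab; have := hS.mem_or_mem_of_adj hcd
  have := hK.not_mem_or_not_mem ac hac; have := hK.not_mem_or_not_mem ad had
  have := hK.not_mem_or_not_mem bc hbc; have := hK.not_mem_or_not_mem bd hbd
  tauto

lemma IsInducedC5.not_isSplit (h : G.IsInducedC5 a b c d e) : ¬G.IsSplit := by
  obtain ⟨hab, hbc, hcd, hde, hea, hac, hbd, hce, hda, heb, ac, bd, ce, da, eb⟩ := h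
  rw [isSplit_iff_exists_isClique_isIndependentSet_compl]
  rintro ⟨K, hK, hS⟩
  have := hS.mem_or_mem_of_adj hab; have := hS.mem_or_mem_of_adj hbc
  have := hS.mem_or_mem_of_adj hcd; have := hS.mem_or_mem_of_adj hde
  have := hS.mem_or_mem_of_adj hea
  have := hK.not_mem_or_not_mem ac hac; have := hK.not_mem_or_not_mem bd hbd
  have := hK.not_mem_or_not_mem ce hce; have := hK.not_mem_or_not_mem da hda
  have := hK.not_mem_or_not_mem eb heb
  grind

end Obstructions

section Contraction

variable {u v : V}

@[simp] lemma contractEdge_adj_mk {x y : V} (hx : x ≠ v) (hy : y ≠ v) :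
    (G.contractEdge u v).Adj ⟨x, hx⟩ ⟨y, hy⟩ ↔
      x ≠ y ∧ (G.Adj x y ∨ (x = u ∧ G.Adj v y) ∨ (y = u ∧ G.Adj v x)) := by
  simp [contractEdge]

lemma IsSplit.contractEdge (h : G.IsSplit) (huv : G.Adj u v) : (G.contractEdge u v).IsSplit := by
  rw [isSplit_iff_exists_isClique_isIndependentSet_compl] at h ⊢
  obtain ⟨K, hK, hS⟩ := h
  refine ⟨{x | x.1 ∈ K ∨ x.1 = u}, ?_, ?_⟩
  · have hu : ∀ y ∈ K, y ≠ v → y ≠ u → G.Adj u y ∨ G.Adj v y := fun y hy hyv hyu =>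
      (hS.mem_or_mem_of_adj huv).imp (fun hu => hK hu hy hyu.symm) (fun hv => hK hv hy hyv.symm)
    rintro ⟨x, hx⟩ hxK ⟨y, hy⟩ hyK hne
    have hne' : x ≠ y := fun h => hne (Subtype.ext h)
    refine (contractEdge_adj_mk hx hy).mpr ⟨hne', ?_⟩
    rcases hxK with hxK | rfl <;> rcases hyK with hyK | rfl
    · exact Or.inl (hK hxK hyK hne')
    · exact (hu x hxK hx hne').imp G.adj_symm fun h => Or.inr ⟨rfl, h⟩
    · exact (hu y hyK hy hne'.symm).imp id fun h => Or.inl ⟨rfl, h⟩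
    · exact absurd rfl hne'
  · rintro ⟨x, hx⟩ hxK ⟨y, hy⟩ hyK hne hxy
    simp only [Set.mem_compl_iff, Set.mem_ofPred_eq, not_or] at hxK hyK
    simp only [contractEdge_adj_mk] at hxy
    exact hS hxK.1 hyK.1 hxy.1 (by grind)

end Contraction

def ContractionsSplit (G : SimpleGraph V) : Prop :=
  ∀ u v, G.Adj u v → (G.contractEdge u v).IsSplit

lemma IsInducedC5.not_contractionsSplit {a b c d e : V} (h : G.IsInducedC5 a b c d e) :
    ¬G.ContractionsSplit := fun hG => by
  obtain ⟨hab, hbc, hcd, hde, hea, hac, hbd, hce, hda, heb, ac, bd, ce, da, eb⟩ := h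
  -- contracting `ab` turns the 5-cycle into the 4-cycle `a c d e`
  refine IsInducedC4.not_isSplit (a := ⟨a, hab.ne⟩) (b := ⟨c, hbc.ne'⟩) (c := ⟨d, bd.symm⟩)
    (d := ⟨e, eb⟩) ?_ (hG a b hab)
  simp only [IsInducedC4, contractEdge_adj_mk, ne_eq, Subtype.mk.injEq]
  grind [SimpleGraph.adj_comm, SimpleGraph.irrefl]

section FoldesHammer

open Finset

variable {K : Finset V} {p q k : V}

lemma IsMaximumClique.exists_not_adj [Finite V] (hK : G.IsMaximumClique K) (hp : p ∉ K) :
    ∃ k ∈ K, ¬G.Adj p k := by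
  classical
  by_contra! h
  have := hK.maximum (insert p K) <| by
    rw [coe_insert]; exact hK.isClique.insert fun k hk _ => h k hk
  rw [card_insert_of_notMem hp] at this
  omega

lemma IsMaximumClique.insert_erase [Finite V] [DecidableEq V] (hK : G.IsMaximumClique K)
    (hp : p ∉ K) (hk : k ∈ K) (hpK : ∀ x ∈ K, x ≠ k → G.Adj p x) :
    G.IsMaximumClique (insert p (K.erase k)) := by
  refine ⟨?_, fun t ht => ?_⟩
  · rw [coe_insert]
    refine (hK.isClique.subset (by simp)).insert fun x hx _ => ?_
    exact hpK x (mem_of_mem_erase hx) (ne_of_mem_erase hx)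
  · rw [card_insert_of_notMem fun h => hp (mem_of_mem_erase h), card_erase_add_one hk]
    exact hK.maximum t ht

lemma IsMaximumClique.exists_adj_notMem [Fintype V] [DecidableEq V] [DecidableRel G.Adj]
    (hK : G.IsMaximumClique K)
    (hKdeg : ∀ K', G.IsMaximumClique K' → ∑ x ∈ K', G.degree x ≤ ∑ x ∈ K, G.degree x)
    (hp : p ∉ K) (hk : k ∈ K) (hpK : ∀ x ∈ K, x ≠ k → G.Adj p x) (hpq : G.Adj p q)
    (hkq : ¬G.Adj k q) : ∃ z, G.Adj k z ∧ z ∉ K := by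
  -- swapping `k` for `p` keeps `K` maximum, so `k` has at least as many neighbours as `p`
  have hdeg : G.degree p ≤ G.degree k := by
    have := hKdeg _ (hK.insert_erase hp hk hpK)
    rwa [sum_insert fun h => hp (mem_of_mem_erase h), ← add_sum_erase K _ hk,
      add_le_add_iff_right] at this
  by_contra! hkK
  have hsub : G.neighborFinset k ⊂ G.neighborFinset p := by
    refine (ssubset_iff_of_subset fun x hx => ?_).mpr ⟨q, by simpa using hpq, by simpa using hkq⟩
    rw [mem_neighborFinset] at hx ⊢
    exact hpK x (hkK x hx) hx.ne'
  have := card_lt_card hsub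
  rw [card_neighborFinset_eq_degree, card_neighborFinset_eq_degree] at this
  omega

variable (h4 : ∀ a b c d, ¬G.IsInducedC4 a b c d)
include h4

lemma exists_common_not_adj_of_forall_not_isInducedC4 (hK : G.IsClique (K : Set V))
    (hp : p ∉ K) (hq : q ∉ K) (hpq : G.Adj p q) (hp' : ∃ k ∈ K, ¬G.Adj p k)
    (hq' : ∃ k ∈ K, ¬G.Adj q k) : ∃ k ∈ K, ¬G.Adj p k ∧ ¬G.Adj q k := by
  obtain ⟨r, hr, hpr⟩ := hp'
  obtain ⟨w, hw, hqw⟩ := hq'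
  by_cases hqr : G.Adj q r
  · by_cases hpw : G.Adj p w
    · have hrw : r ≠ w := by rintro rfl; exact hpr hpw
      exact absurd ⟨hpq, hqr, hK hr hw hrw, hpw.symm, hpr, hqw,
        fun h => hp (h ▸ hr), fun h => hq (h ▸ hw)⟩ (h4 p q r w)
    · exact ⟨w, hw, hpw, hqw⟩
  · exact ⟨r, hr, hpr, hqr⟩

lemma exists_common_not_adj_and_forall_adj (h2 : ∀ a b c d, ¬G.IsInduced2K2 a b c d)
    (hK : G.IsClique (K : Set V)) (hp : p ∉ K) (hq : q ∉ K) (hpq : G.Adj p q)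
    (hp' : ∃ k ∈ K, ¬G.Adj p k) (hq' : ∃ k ∈ K, ¬G.Adj q k) :
    ∃ k ∈ K, ¬G.Adj p k ∧ ¬G.Adj q k ∧
      ((∀ x ∈ K, x ≠ k → G.Adj p x) ∨ (∀ x ∈ K, x ≠ k → G.Adj q x)) := by
  obtain ⟨k, hk, hpk, hqk⟩ :=
    exists_common_not_adj_of_forall_not_isInducedC4 h4 hK hp hq hpq hp' hq'
  refine ⟨k, hk, hpk, hqk, ?_⟩
  by_contra! ⟨⟨r, hr, hrk, hpr⟩, ⟨w, hw, hwk, hqw⟩⟩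
  have hne : ∀ {x y}, x ∈ K → y ∉ K → x ≠ y := fun hx hy h => hy (h ▸ hx)
  have hqr : G.Adj q r := by
    by_contra hqr
    exact h2 p q k r ⟨hpq, hK hk hr hrk.symm, hpk, hpr, hqk, hqr,
      (hne hk hp).symm, (hne hr hp).symm, (hne hk hq).symm, (hne hr hq).symm⟩
  have hpw : G.Adj p w := by
    by_contra hpw
    exact h2 p q k w ⟨hpq, hK hk hw hwk.symm, hpk, hpw, hqk, hqw,
      (hne hk hp).symm, (hne hw hp).symm, (hne hk hq).symm, (hne hw hq).symm⟩
  have hrw : r ≠ w := by rintro rfl; exact hqw hqr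
  exact h4 p q r w ⟨hpq, hqr, hK hr hw hrw, hpw.symm, hpr, hqw, (hne hr hp).symm,
    (hne hw hq).symm⟩

/-- The Földes–Hammer theorem. -/
theorem isSplit_of_forall_not_isInduced [Finite V] (h2 : ∀ a b c d, ¬G.IsInduced2K2 a b c d)
    (h5 : ∀ a b c d e, ¬G.IsInducedC5 a b c d e) : G.IsSplit := by
  classical
  have := Fintype.ofFinite V
  -- a maximum clique with the largest degree sum, equivalently with the fewest edges off it
  obtain ⟨K, hKmax, hKdeg⟩ := exists_max_image {K | G.IsMaximumClique K} (∑ x ∈ ·, G.degree x)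
    (G.maximumClique_exists.imp fun K hK => by simpa using hK)
  simp only [mem_filter, mem_univ, true_and] at hKmax hKdeg
  have hK := hKmax.isClique
  have hmiss : ∀ {z}, z ∉ K → ∃ k ∈ K, ¬G.Adj z k := hKmax.exists_not_adj
  have hne : ∀ {x y}, x ∈ K → y ∉ K → x ≠ y := fun hx hy h => hy (h ▸ hx)
  refine isSplit_iff_exists_isClique_isIndependentSet_compl.mpr ⟨K, hK, ?_⟩
  intro p hp q hq hpq' hpq
  simp only [Set.mem_compl_iff, mem_coe] at hp hq
  wlog honly : ∃ k ∈ K, ¬G.Adj p k ∧ ¬G.Adj q k ∧ ∀ x ∈ K, x ≠ k → G.Adj p x generalizing p q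
  · obtain ⟨k, hk, hpk, hqk, hp' | hq'⟩ :=
      exists_common_not_adj_and_forall_adj h4 h2 hK hp hq hpq (hmiss hp) (hmiss hq)
    · exact honly ⟨k, hk, hpk, hqk, hp'⟩
    · exact this hpq'.symm hpq.symm hq hp ⟨k, hk, hqk, hpk, hq'⟩
  obtain ⟨k, hk, hpk, hqk, hpK⟩ := honly
  obtain ⟨z, hkz, hz⟩ :=
    hKmax.exists_adj_notMem hKdeg hp hk hpK hpq fun h => hqk h.symm
  have hpz' : p ≠ z := by rintro rfl; exact hpk hkz.symm
  have hqz' : q ≠ z := by rintro rfl; exact hqk hkz.symm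
  by_cases hpz : G.Adj p z
  · obtain ⟨k', hk', hpk', hzk'⟩ :=
      exists_common_not_adj_of_forall_not_isInducedC4 h4 hK hp hz hpz (hmiss hp) (hmiss hz)
    obtain rfl : k' = k := by_contra fun h => hpk' (hpK k' hk' h)
    exact hzk' hkz.symm
  by_cases hqz : G.Adj q z
  · obtain ⟨l, hl, hql, hzl⟩ :=
      exists_common_not_adj_of_forall_not_isInducedC4 h4 hK hq hz hqz (hmiss hq) (hmiss hz)
    have hlk : l ≠ k := by rintro rfl; exact hzl hkz.symm
    exact h5 p q z k l ⟨hpq, hqz, hkz.symm, hK hk hl hlk.symm, (hpK l hl hlk).symm, hpz, hqk,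
      hzl, fun h => hpk h.symm, fun h => hql h.symm, hpz', (hne hk hq).symm, (hne hl hz).symm,
      hne hk hp, hne hl hq⟩
  · exact h2 p q k z ⟨hpq, hkz, hpk, hpz, hqk, hqz, (hne hk hp).symm, hpz',
      (hne hk hq).symm, hqz'⟩

end FoldesHammer

section Recognition

lemma nonempty_iso_of_bijective {n : ℕ} {H : SimpleGraph (Fin n)} (f : Fin n → V)
    (hf : f.Bijective) (hadj : ∀ i j, G.Adj (f i) (f j) ↔ H.Adj i j) : Nonempty (G ≃g H) :=
  ⟨(⟨Equiv.ofBijective f hf, hadj _ _⟩ : H ≃g G).symm⟩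

variable {v₀ v₁ v₂ v₃ v₄ v₅ : V}

lemma nonempty_iso_pathGraph_five (hcov : ∀ w, w = v₀ ∨ w = v₁ ∨ w = v₂ ∨ w = v₃ ∨ w = v₄)
    (h01 : G.Adj v₀ v₁) (h12 : G.Adj v₁ v₂) (h23 : G.Adj v₂ v₃) (h34 : G.Adj v₃ v₄)
    (h02 : ¬G.Adj v₀ v₂) (h03 : ¬G.Adj v₀ v₃) (h04 : ¬G.Adj v₀ v₄) (h13 : ¬G.Adj v₁ v₃)
    (h14 : ¬G.Adj v₁ v₄) (h24 : ¬G.Adj v₂ v₄) (e02 : v₀ ≠ v₂) (e03 : v₀ ≠ v₃) (e04 : v₀ ≠ v₄)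
    (e13 : v₁ ≠ v₃) (e14 : v₁ ≠ v₄) (e24 : v₂ ≠ v₄) : Nonempty (G ≃g pathGraph 5) := by
  refine nonempty_iso_of_bijective ![v₀, v₁, v₂, v₃, v₄] ⟨fun i j h => ?_, fun w => ?_⟩
    fun i j => ?_
  · fin_cases i <;> fin_cases j <;> simp at h ⊢ <;> grind [SimpleGraph.irrefl]
  · rcases hcov w with rfl | rfl | rfl | rfl | rfl
    exacts [⟨0, rfl⟩, ⟨1, rfl⟩, ⟨2, rfl⟩, ⟨3, rfl⟩, ⟨4, rfl⟩]
  · fin_cases i <;> fin_cases j <;> simp [pathGraph_adj] <;>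
      grind [SimpleGraph.adj_comm, SimpleGraph.irrefl]

lemma nonempty_iso_hammerGraph (hcov : ∀ w, w = v₀ ∨ w = v₁ ∨ w = v₂ ∨ w = v₃ ∨ w = v₄)
    (h01 : G.Adj v₀ v₁) (h02 : G.Adj v₀ v₂) (h12 : G.Adj v₁ v₂) (h23 : G.Adj v₂ v₃)
    (h34 : G.Adj v₃ v₄) (h03 : ¬G.Adj v₀ v₃) (h04 : ¬G.Adj v₀ v₄) (h13 : ¬G.Adj v₁ v₃)
    (h14 : ¬G.Adj v₁ v₄) (h24 : ¬G.Adj v₂ v₄) (e03 : v₀ ≠ v₃) (e04 : v₀ ≠ v₄) (e13 : v₁ ≠ v₃)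
    (e14 : v₁ ≠ v₄) (e24 : v₂ ≠ v₄) : Nonempty (G ≃g hammerGraph) := by
  refine nonempty_iso_of_bijective ![v₀, v₁, v₂, v₃, v₄] ⟨fun i j h => ?_, fun w => ?_⟩
    fun i j => ?_
  · fin_cases i <;> fin_cases j <;> simp at h ⊢ <;> grind [SimpleGraph.irrefl]
  · rcases hcov w with rfl | rfl | rfl | rfl | rfl
    exacts [⟨0, rfl⟩, ⟨1, rfl⟩, ⟨2, rfl⟩, ⟨3, rfl⟩, ⟨4, rfl⟩]
  · fin_cases i <;> fin_cases j <;> simp [hammerGraph] <;>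
      grind [SimpleGraph.adj_comm, SimpleGraph.irrefl]

lemma nonempty_iso_butterflyGraph (hcov : ∀ w, w = v₀ ∨ w = v₁ ∨ w = v₂ ∨ w = v₃ ∨ w = v₄)
    (h01 : G.Adj v₀ v₁) (h02 : G.Adj v₀ v₂) (h12 : G.Adj v₁ v₂) (h23 : G.Adj v₂ v₃)
    (h24 : G.Adj v₂ v₄) (h34 : G.Adj v₃ v₄) (h03 : ¬G.Adj v₀ v₃) (h04 : ¬G.Adj v₀ v₄)
    (h13 : ¬G.Adj v₁ v₃) (h14 : ¬G.Adj v₁ v₄) (e03 : v₀ ≠ v₃) (e04 : v₀ ≠ v₄) (e13 : v₁ ≠ v₃)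
    (e14 : v₁ ≠ v₄) : Nonempty (G ≃g butterflyGraph) := by
  refine nonempty_iso_of_bijective ![v₀, v₁, v₂, v₃, v₄] ⟨fun i j h => ?_, fun w => ?_⟩
    fun i j => ?_
  · fin_cases i <;> fin_cases j <;> simp at h ⊢ <;> grind [SimpleGraph.irrefl]
  · rcases hcov w with rfl | rfl | rfl | rfl | rfl
    exacts [⟨0, rfl⟩, ⟨1, rfl⟩, ⟨2, rfl⟩, ⟨3, rfl⟩, ⟨4, rfl⟩]
  · fin_cases i <;> fin_cases j <;> simp [butterflyGraph] <;>
      grind [SimpleGraph.adj_comm, SimpleGraph.irrefl]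

lemma IsInducedC4.nonempty_iso_W4Graph (hC : G.IsInducedC4 v₀ v₁ v₂ v₃)
    (hcov : ∀ w, w = v₀ ∨ w = v₁ ∨ w = v₂ ∨ w = v₃ ∨ w = v₄) (h40 : G.Adj v₄ v₀)
    (h41 : G.Adj v₄ v₁) (h42 : G.Adj v₄ v₂) (h43 : G.Adj v₄ v₃) : Nonempty (G ≃g W4Graph) := by
  obtain ⟨h01, h12, h23, h30, h02, h13, e02, e13⟩ := hC
  refine nonempty_iso_of_bijective ![v₀, v₁, v₂, v₃, v₄] ⟨fun i j h => ?_, fun w => ?_⟩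
    fun i j => ?_
  · fin_cases i <;> fin_cases j <;> simp at h ⊢ <;> grind [SimpleGraph.irrefl]
  · rcases hcov w with rfl | rfl | rfl | rfl | rfl
    exacts [⟨0, rfl⟩, ⟨1, rfl⟩, ⟨2, rfl⟩, ⟨3, rfl⟩, ⟨4, rfl⟩]
  · fin_cases i <;> fin_cases j <;> simp [W4Graph] <;>
      grind [SimpleGraph.adj_comm, SimpleGraph.irrefl]

lemma IsInducedC4.nonempty_iso_E2JoinC4Graph (hC : G.IsInducedC4 v₀ v₁ v₂ v₃)
    (hcov : ∀ w, w = v₀ ∨ w = v₁ ∨ w = v₂ ∨ w = v₃ ∨ w = v₄ ∨ w = v₅) (h40 : G.Adj v₄ v₀)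
    (h41 : G.Adj v₄ v₁) (h42 : G.Adj v₄ v₂) (h43 : G.Adj v₄ v₃) (h50 : G.Adj v₅ v₀)
    (h51 : G.Adj v₅ v₁) (h52 : G.Adj v₅ v₂) (h53 : G.Adj v₅ v₃) (h45 : ¬G.Adj v₄ v₅)
    (e45 : v₄ ≠ v₅) : Nonempty (G ≃g E2JoinC4Graph) := by
  obtain ⟨h01, h12, h23, h30, h02, h13, e02, e13⟩ := hC
  refine nonempty_iso_of_bijective ![v₀, v₁, v₂, v₃, v₄, v₅] ⟨fun i j h => ?_, fun w => ?_⟩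
    fun i j => ?_
  · fin_cases i <;> fin_cases j <;> simp at h ⊢ <;> grind [SimpleGraph.irrefl]
  · rcases hcov w with rfl | rfl | rfl | rfl | rfl | rfl
    exacts [⟨0, rfl⟩, ⟨1, rfl⟩, ⟨2, rfl⟩, ⟨3, rfl⟩, ⟨4, rfl⟩, ⟨5, rfl⟩]
  · fin_cases i <;> fin_cases j <;> simp [E2JoinC4Graph] <;>
      grind [SimpleGraph.adj_comm, SimpleGraph.irrefl]

lemma exists_iso_completeBipartiteGraph [Fintype V] (P : Finset V) (hP : P.card = 2)
    (hPc : P.card + 2 ≤ Fintype.card V) (hadj : ∀ x y, G.Adj x y ↔ (x ∈ P ↔ y ∉ P)) :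
    ∃ l, 2 ≤ l ∧ Nonempty (G ≃g completeBipartiteGraph (Fin 2) (Fin l)) := by
  classical
  let toBip : completeBipartiteGraph {x // x ∈ P} {x // x ∉ P} ≃g G :=
    ⟨Equiv.sumCompl (· ∈ P), by
      rintro (⟨x, hx⟩ | ⟨x, hx⟩) (⟨y, hy⟩ | ⟨y, hy⟩) <;> simp [hadj, hx, hy]⟩
  refine ⟨Fintype.card {x // x ∉ P}, ?_, ⟨toBip.symm.trans (completeBipartiteGraphCongr
    (Fintype.equivFinOfCardEq (by simpa using hP)) (Fintype.equivFin _))⟩⟩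
  rw [Fintype.card_subtype_compl, Fintype.card_coe]
  omega

end Recognition

section InducedC4

variable {a b c d y z : V}

lemma IsInducedC4.rotate (hC : G.IsInducedC4 a b c d) : G.IsInducedC4 b c d a := by
  obtain ⟨hab, hbc, hcd, hda, hac, hbd, ac, bd⟩ := hC
  exact ⟨hbc, hcd, hda, hab, hbd, fun h => hac h.symm, bd, ac.symm⟩

variable (hC : G.IsInducedC4 a b c d) (hG : G.ContractionsSplit)
include hC hG

lemma IsInducedC4.mem_of_adj (ya : y ≠ a) (yb : y ≠ b) (yc : y ≠ c) (yd : y ≠ d)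
    (hyz : G.Adj y z) : z = a ∨ z = b ∨ z = c ∨ z = d := by
  obtain ⟨hab, hbc, hcd, hda, hac, hbd, ac, bd⟩ := hC
  by_contra! hz
  refine IsInducedC4.not_isSplit (a := ⟨a, hz.1.symm⟩) (b := ⟨b, hz.2.1.symm⟩)
    (c := ⟨c, hz.2.2.1.symm⟩) (d := ⟨d, hz.2.2.2.symm⟩) ?_ (hG y z hyz)
  simp only [IsInducedC4, contractEdge_adj_mk, ne_eq, Subtype.mk.injEq]
  grind [SimpleGraph.adj_comm, SimpleGraph.irrefl]

lemma IsInducedC4.not_adj_of_outside (ya : y ≠ a) (yb : y ≠ b) (yc : y ≠ c) (yd : y ≠ d)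
    (za : z ≠ a) (zb : z ≠ b) (zc : z ≠ c) (zd : z ≠ d) : ¬G.Adj y z := fun hyz => by
  rcases hC.mem_of_adj hG ya yb yc yd hyz with rfl | rfl | rfl | rfl <;> contradiction

lemma IsInducedC4.adj_of_adj (ya : y ≠ a) (yb : y ≠ b) (yc : y ≠ c) (yd : y ≠ d)
    (hya : G.Adj y a) : G.Adj y c := by
  obtain ⟨hab, hbc, hcd, hda, hac, hbd, ac, bd⟩ := hC
  by_contra hyc
  -- contracting `ya` makes `y` adjacent to `b` and `d`, giving the 4-cycle `y b c d`
  refine IsInducedC4.not_isSplit (a := ⟨y, ya⟩) (b := ⟨b, hab.ne'⟩) (c := ⟨c, ac.symm⟩)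
    (d := ⟨d, hda.ne⟩) ?_ (hG y a hya)
  simp only [IsInducedC4, contractEdge_adj_mk, ne_eq, Subtype.mk.injEq]
  grind [SimpleGraph.adj_comm, SimpleGraph.irrefl]

lemma IsInducedC4.adj_iff_adj (ya : y ≠ a) (yb : y ≠ b) (yc : y ≠ c) (yd : y ≠ d) :
    G.Adj y a ↔ G.Adj y c :=
  ⟨hC.adj_of_adj hG ya yb yc yd, hC.rotate.rotate.adj_of_adj hG yc yd ya yb⟩

lemma IsInducedC4.adj_or_adj (hconn : G.Connected) (ya : y ≠ a) (yb : y ≠ b) (yc : y ≠ c)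
    (yd : y ≠ d) : G.Adj y a ∨ G.Adj y b := by
  have : Nontrivial V := ⟨⟨y, a, ya⟩⟩
  obtain ⟨x, hyx⟩ := hconn.preconnected.exists_adj_of_nontrivial y
  rcases hC.mem_of_adj hG ya yb yc yd hyx with rfl | rfl | rfl | rfl
  · exact Or.inl hyx
  · exact Or.inr hyx
  · exact Or.inl ((hC.adj_iff_adj hG ya yb yc yd).mpr hyx)
  · exact Or.inr ((hC.rotate.adj_iff_adj hG yb yc yd ya).mpr hyx)

lemma IsInducedC4.false_of_adj_of_adj (ya : y ≠ a) (yb : y ≠ b) (yc : y ≠ c) (yd : y ≠ d)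
    (za : z ≠ a) (zb : z ≠ b) (zc : z ≠ c) (zd : z ≠ d)
    (hya : G.Adj y a) (hyb : ¬G.Adj y b) (hzb : G.Adj z b) (hza : ¬G.Adj z a) : False := by
  have hzd := (hC.rotate.adj_iff_adj hG zb zc zd za).mp hzb
  have hyz := hC.not_adj_of_outside hG ya yb yc yd za zb zc zd
  obtain ⟨hab, hbc, hcd, hda, hac, hbd, ac, bd⟩ := hC
  -- contracting `ya` gives the 4-cycle `y b z d`
  refine IsInducedC4.not_isSplit (a := ⟨y, ya⟩) (b := ⟨b, hab.ne'⟩) (c := ⟨z, za⟩)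
    (d := ⟨d, hda.ne⟩) ?_ (hG y a hya)
  simp only [IsInducedC4, contractEdge_adj_mk, ne_eq, Subtype.mk.injEq]
  grind [SimpleGraph.adj_comm, SimpleGraph.irrefl]

lemma IsInducedC4.adj_of_adj_of_adj_of_adj (ya : y ≠ a) (yb : y ≠ b) (yc : y ≠ c) (yd : y ≠ d)
    (za : z ≠ a) (zb : z ≠ b) (zc : z ≠ c) (zd : z ≠ d)
    (hza : G.Adj z a) (hzb : G.Adj z b) (hya : G.Adj y a) : G.Adj y b := by
  have hzc := (hC.adj_iff_adj hG za zb zc zd).mp hza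
  have hyc := (hC.adj_iff_adj hG ya yb yc yd).mp hya
  have hyz := hC.not_adj_of_outside hG za zb zc zd ya yb yc yd
  rcases eq_or_ne z y with rfl | hzy
  · exact hzb
  obtain ⟨hab, hbc, hcd, hda, hac, hbd, ac, bd⟩ := hC
  -- `z a y c` is an induced 4-cycle and `b` sees `z`, so `b` sees `y` as well
  exact G.adj_symm <| IsInducedC4.adj_of_adj (a := z) (b := a) (c := y) (d := c)
    ⟨hza, hya.symm, hyc, hzc.symm, hyz, hac, hzy, ac⟩ hG zb.symm hab.ne' yb.symm hbc.ne hzb.symm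

end InducedC4

section C4Classification

open Finset

variable {a b c d : V} (hC : G.IsInducedC4 a b c d) (hG : G.ContractionsSplit)
include hC hG

lemma IsInducedC4.isExceptional_of_forall_adj [Fintype V]
    (hout : ∀ y, y ≠ a → y ≠ b → y ≠ c → y ≠ d → G.Adj y a ∧ ¬G.Adj y b) : IsExceptional G := by
  classical
  have hout' : ∀ y, y ≠ a → y ≠ b → y ≠ c → y ≠ d →
      G.Adj y a ∧ G.Adj y c ∧ ¬G.Adj y b ∧ ¬G.Adj y d := fun y ya yb yc yd =>
    ⟨(hout y ya yb yc yd).1, (hC.adj_iff_adj hG ya yb yc yd).mp (hout y ya yb yc yd).1,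
      (hout y ya yb yc yd).2,
      fun h => (hout y ya yb yc yd).2 ((hC.rotate.adj_iff_adj hG yb yc yd ya).mpr h)⟩
  have hind := fun {y z : V} => hC.not_adj_of_outside hG (y := y) (z := z)
  obtain ⟨hab, hbc, hcd, hda, hac, hbd, ac, bd⟩ := hC
  refine Or.inl <| exists_iso_completeBipartiteGraph {a, c} (by simp [ac]) ?_ fun x y => ?_
  · have : ({a, b, c, d} : Finset V).card = 4 := by
      rw [card_insert_of_notMem, card_insert_of_notMem, card_pair hcd.ne] <;>
        simp [hab.ne, ac, hda.ne.symm, hbc.ne, bd]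
    simpa [ac, this] using card_le_univ ({a, b, c, d} : Finset V)
  · simp only [Finset.mem_insert, Finset.mem_singleton]
    by_cases x = a ∨ x = b ∨ x = c ∨ x = d <;> by_cases y = a ∨ y = b ∨ y = c ∨ y = d <;>
      grind [SimpleGraph.adj_comm, SimpleGraph.irrefl]

lemma IsInducedC4.isExceptional_of_adj_of_adj (hconn : G.Connected) {z : V} (za : z ≠ a)
    (zb : z ≠ b) (zc : z ≠ c) (zd : z ≠ d) (hza : G.Adj z a) (hzb : G.Adj z b) :
    IsExceptional G := by
  have hall : ∀ y, y ≠ a → y ≠ b → y ≠ c → y ≠ d →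
      G.Adj y a ∧ G.Adj y b ∧ G.Adj y c ∧ G.Adj y d := by
    intro y ya yb yc yd
    obtain ⟨hya, hyb⟩ : G.Adj y a ∧ G.Adj y b := by
      rcases hC.adj_or_adj hG hconn ya yb yc yd with hya | hyb
      · exact ⟨hya, hC.adj_of_adj_of_adj_of_adj hG ya yb yc yd za zb zc zd hza hzb hya⟩
      · have hzc := (hC.adj_iff_adj hG za zb zc zd).mp hza
        have hyc := hC.rotate.adj_of_adj_of_adj_of_adj hG yb yc yd ya zb zc zd za hzb hzc hyb
        exact ⟨(hC.adj_iff_adj hG ya yb yc yd).mpr hyc, hyb⟩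
    exact ⟨hya, hyb, (hC.adj_iff_adj hG ya yb yc yd).mp hya,
      (hC.rotate.adj_iff_adj hG yb yc yd ya).mp hyb⟩
  obtain ⟨hza, hzb, hzc, hzd⟩ := hall z za zb zc zd
  obtain ⟨hab, -, -, hda, -, hbd, -, bd⟩ := id hC
  by_cases hz' : ∃ z', z' ≠ a ∧ z' ≠ b ∧ z' ≠ c ∧ z' ≠ d ∧ z' ≠ z
  · obtain ⟨z', z'a, z'b, z'c, z'd, z'z⟩ := hz'
    obtain ⟨hz'a, hz'b, hz'c, hz'd⟩ := hall z' z'a z'b z'c z'd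
    have hzz' := hC.not_adj_of_outside hG za zb zc zd z'a z'b z'c z'd
    have hC' : G.IsInducedC4 b z d z' :=
      ⟨hzb.symm, hzd, hz'd.symm, hz'b, hbd, hzz', bd, z'z.symm⟩
    have hcov : ∀ w, w = a ∨ w = b ∨ w = c ∨ w = d ∨ w = z ∨ w = z' := by
      intro w
      by_contra! ⟨wa, wb, wc, wd, wz, wz'⟩
      -- `w a` would be an edge avoiding the induced 4-cycle `b z d z'`
      rcases hC'.mem_of_adj hG wb wz wd wz' (hall w wa wb wc wd).1 with h | h | h | h
      exacts [hab.ne h, za h.symm, hda.ne h.symm, z'a h.symm]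
    exact Or.inr <| Or.inr <| Or.inl <|
      hC.nonempty_iso_E2JoinC4Graph hcov hza hzb hzc hzd hz'a hz'b hz'c hz'd hzz' z'z.symm
  · push Not at hz'
    refine Or.inr <| Or.inl <| hC.nonempty_iso_W4Graph (fun w => ?_) hza hzb hzc hzd
    by_contra! ⟨wa, wb, wc, wd, wz⟩
    exact wz (hz' w wa wb wc wd)

theorem IsInducedC4.isExceptional [Fintype V] (hconn : G.Connected) : IsExceptional G := by
  by_cases hfull : ∃ z, z ≠ a ∧ z ≠ b ∧ z ≠ c ∧ z ≠ d ∧ G.Adj z a ∧ G.Adj z b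
  · obtain ⟨z, za, zb, zc, zd, hza, hzb⟩ := hfull
    exact hC.isExceptional_of_adj_of_adj hG hconn za zb zc zd hza hzb
  push Not at hfull
  by_cases hb : ∃ y, y ≠ a ∧ y ≠ b ∧ y ≠ c ∧ y ≠ d ∧ G.Adj y b
  · obtain ⟨y, ya, yb, yc, yd, hyb⟩ := hb
    have hya : ¬G.Adj y a := fun hya => hfull y ya yb yc yd hya hyb
    refine hC.rotate.isExceptional_of_forall_adj hG fun x xb xc xd xa => ?_
    rcases hC.adj_or_adj hG hconn xa xb xc xd with hxa | hxb
    · exact (hC.false_of_adj_of_adj hG xa xb xc xd ya yb yc yd hxa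
        (hfull x xa xb xc xd hxa) hyb hya).elim
    · exact ⟨hxb, fun hxc => hfull x xa xb xc xd ((hC.adj_iff_adj hG xa xb xc xd).mpr hxc) hxb⟩
  · push Not at hb
    refine hC.isExceptional_of_forall_adj hG fun x xa xb xc xd => ⟨?_, hb x xa xb xc xd⟩
    exact (hC.adj_or_adj hG hconn xa xb xc xd).resolve_right (hb x xa xb xc xd)

end C4Classification

section Induced2K2

variable {a b c d y z : V}

lemma IsInduced2K2.swap_left (h : G.IsInduced2K2 a b c d) : G.IsInduced2K2 b a c d := by
  obtain ⟨hab, hcd, hac, had, hbc, hbd, ac, ad, bc, bd⟩ := h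
  exact ⟨hab.symm, hcd, hbc, hbd, hac, had, bc, bd, ac, ad⟩

lemma IsInduced2K2.swap_right (h : G.IsInduced2K2 a b c d) : G.IsInduced2K2 a b d c := by
  obtain ⟨hab, hcd, hac, had, hbc, hbd, ac, ad, bc, bd⟩ := h
  exact ⟨hab, hcd.symm, had, hac, hbd, hbc, ad, ac, bd, bc⟩

lemma IsInduced2K2.symm (h : G.IsInduced2K2 a b c d) : G.IsInduced2K2 c d a b := by
  obtain ⟨hab, hcd, hac, had, hbc, hbd, ac, ad, bc, bd⟩ := h
  exact ⟨hcd, hab, fun h => hac h.symm, fun h => hbc h.symm, fun h => had h.symm,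
    fun h => hbd h.symm, ac.symm, bc.symm, ad.symm, bd.symm⟩

lemma IsInduced2K2.isExceptional_of_adj_of_adj (h : G.IsInduced2K2 a b c d)
    (hcov : ∀ w, w = a ∨ w = b ∨ w = c ∨ w = d ∨ w = y) (yb : y ≠ b) (yd : y ≠ d)
    (hya : G.Adj y a) (hyc : G.Adj y c) : IsExceptional G := by
  obtain ⟨hab, hcd, hac, had, hbc, hbd, ac, ad, bc, bd⟩ := h
  suffices Nonempty (G ≃g pathGraph 5) ∨ Nonempty (G ≃g hammerGraph) ∨
      Nonempty (G ≃g butterflyGraph) from Or.inr <| Or.inr <| Or.inr <| Or.inr this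
  have hcov₁ : ∀ w, w = a ∨ w = b ∨ w = y ∨ w = c ∨ w = d := fun w => by have := hcov w; tauto
  have hcov₂ : ∀ w, w = c ∨ w = d ∨ w = y ∨ w = a ∨ w = b := fun w => by have := hcov w; tauto
  have hcov₃ : ∀ w, w = b ∨ w = a ∨ w = y ∨ w = c ∨ w = d := fun w => by have := hcov w; tauto
  by_cases hyb : G.Adj y b <;> by_cases hyd : G.Adj y d
  · exact Or.inr <| Or.inr <| nonempty_iso_butterflyGraph hcov₁ hab hya.symm hyb.symm hyc hyd hcd
      hac had hbc hbd ac ad bc bd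
  · exact Or.inr <| Or.inl <| nonempty_iso_hammerGraph hcov₁ hab hya.symm hyb.symm hyc hcd
      hac had hbc hbd hyd ac ad bc bd yd
  · exact Or.inr <| Or.inl <| nonempty_iso_hammerGraph hcov₂ hcd hyc.symm hyd.symm hya hab
      (fun h => hac h.symm) (fun h => hbc h.symm) (fun h => had h.symm) (fun h => hbd h.symm) hyb
      ac.symm bc.symm ad.symm bd.symm yb
  · exact Or.inl <| nonempty_iso_pathGraph_five hcov₃ hab.symm hya.symm hyc hcd
      (fun h => hyb h.symm) hbc hbd hac had hyd yb.symm bc bd ac ad yd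

lemma IsInduced2K2.exists_ne (h : G.IsInduced2K2 a b c d) (hconn : G.Connected) :
    ∃ y, y ≠ a ∧ y ≠ b ∧ y ≠ c ∧ y ≠ d := by
  obtain ⟨hab, hcd, hac, had, hbc, hbd, ac, ad, bc, bd⟩ := h
  obtain ⟨p⟩ := hconn.preconnected a c
  obtain ⟨⟨⟨x, w⟩, hxw⟩, -, hx, hw⟩ :=
    p.exists_boundary_dart {a, b} (by simp) (by simp [ac.symm, bc.symm])
  simp only [Set.mem_insert_iff, Set.mem_singleton_iff, not_or] at hx hw
  by_contra! hall
  have hw' : w = c ∨ w = d := (eq_or_ne w c).imp_right (hall w hw.1 hw.2)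
  rcases hx with rfl | rfl <;> rcases hw' with rfl | rfl <;> contradiction

variable (h : G.IsInduced2K2 a b c d) (hG : G.ContractionsSplit)
include h hG

lemma IsInduced2K2.mem_of_adj (ya : y ≠ a) (yb : y ≠ b) (yc : y ≠ c) (yd : y ≠ d)
    (hyz : G.Adj y z) : z = a ∨ z = b ∨ z = c ∨ z = d := by
  obtain ⟨hab, hcd, hac, had, hbc, hbd, ac, ad, bc, bd⟩ := h
  by_contra! hz
  refine IsInduced2K2.not_isSplit (a := ⟨a, hz.1.symm⟩) (b := ⟨b, hz.2.1.symm⟩)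
    (c := ⟨c, hz.2.2.1.symm⟩) (d := ⟨d, hz.2.2.2.symm⟩) ?_ (hG y z hyz)
  simp only [IsInduced2K2, contractEdge_adj_mk, ne_eq, Subtype.mk.injEq]
  grind [SimpleGraph.adj_comm, SimpleGraph.irrefl]

lemma IsInduced2K2.not_adj_of_outside (ya : y ≠ a) (yb : y ≠ b) (yc : y ≠ c) (yd : y ≠ d)
    (za : z ≠ a) (zb : z ≠ b) (zc : z ≠ c) (zd : z ≠ d) : ¬G.Adj y z := fun hyz => by
  rcases h.mem_of_adj hG ya yb yc yd hyz with rfl | rfl | rfl | rfl <;> contradiction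

lemma IsInduced2K2.adj_or_adj_of_adj (ya : y ≠ a) (yb : y ≠ b) (yc : y ≠ c) (yd : y ≠ d)
    (hya : G.Adj y a) : G.Adj y c ∨ G.Adj y d := by
  obtain ⟨hab, hcd, hac, had, hbc, hbd, ac, ad, bc, bd⟩ := h
  by_contra! ⟨hyc, hyd⟩
  -- contracting `ab` leaves the induced `2K₂` formed by `ay` and `cd`
  refine IsInduced2K2.not_isSplit (a := ⟨a, hab.ne⟩) (b := ⟨y, yb⟩) (c := ⟨c, bc.symm⟩)
    (d := ⟨d, bd.symm⟩) ?_ (hG a b hab)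
  simp only [IsInduced2K2, contractEdge_adj_mk, ne_eq, Subtype.mk.injEq]
  grind [SimpleGraph.adj_comm, SimpleGraph.irrefl]

lemma IsInduced2K2.adj_or_adj (hconn : G.Connected) (ya : y ≠ a) (yb : y ≠ b) (yc : y ≠ c)
    (yd : y ≠ d) : (G.Adj y a ∨ G.Adj y b) ∧ (G.Adj y c ∨ G.Adj y d) := by
  have : Nontrivial V := ⟨⟨y, a, ya⟩⟩
  obtain ⟨x, hyx⟩ := hconn.preconnected.exists_adj_of_nontrivial y
  rcases h.mem_of_adj hG ya yb yc yd hyx with rfl | rfl | rfl | rfl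
  · exact ⟨Or.inl hyx, h.adj_or_adj_of_adj hG ya yb yc yd hyx⟩
  · exact ⟨Or.inr hyx, h.swap_left.adj_or_adj_of_adj hG yb ya yc yd hyx⟩
  · exact ⟨h.symm.adj_or_adj_of_adj hG yc yd ya yb hyx, Or.inl hyx⟩
  · exact ⟨h.symm.swap_left.adj_or_adj_of_adj hG yd yc ya yb hyx, Or.inr hyx⟩

lemma IsInduced2K2.false_of_adj_of_adj (ya : y ≠ a) (yb : y ≠ b) (yc : y ≠ c) (yd : y ≠ d)
    (za : z ≠ a) (zb : z ≠ b) (zc : z ≠ c) (zd : z ≠ d) (hya : G.Adj y a) (hyc : G.Adj y c)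
    (hyd : ¬G.Adj y d) (hza : ¬G.Adj z a) (hzb : G.Adj z b) (hzc : ¬G.Adj z c) (hzd : G.Adj z d) :
    False := by
  have hyz := h.not_adj_of_outside hG ya yb yc yd za zb zc zd
  obtain ⟨hab, hcd, hac, had, hbc, hbd, ac, ad, bc, bd⟩ := h
  -- `y a b z d c` is an induced 6-cycle; contracting `ab` leaves the induced 5-cycle `y a z d c`
  refine IsInducedC5.not_isSplit (a := ⟨y, yb⟩) (b := ⟨a, hab.ne⟩) (c := ⟨z, zb⟩)
    (d := ⟨d, bd.symm⟩) (e := ⟨c, bc.symm⟩) ?_ (hG a b hab)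
  simp only [IsInducedC5, contractEdge_adj_mk, ne_eq, Subtype.mk.injEq]
  grind [SimpleGraph.adj_comm, SimpleGraph.irrefl]

variable (h4 : ∀ a b c d, ¬G.IsInducedC4 a b c d)
include h4

lemma IsInduced2K2.not_adj_of_adj (hconn : G.Connected) (ya : y ≠ a) (yb : y ≠ b) (yc : y ≠ c)
    (yd : y ≠ d) (za : z ≠ a) (zb : z ≠ b) (zc : z ≠ c) (zd : z ≠ d) (hyz : y ≠ z)
    (hya : G.Adj y a) : ¬G.Adj z a := fun hza => by
  have hyz' := h.not_adj_of_outside hG ya yb yc yd za zb zc zd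
  have hy := (h.adj_or_adj hG hconn ya yb yc yd).2
  have hz := (h.adj_or_adj hG hconn za zb zc zd).2
  obtain ⟨hab, hcd, hac, had, hbc, hbd, ac, ad, bc, bd⟩ := h
  -- a common neighbour `q` of `y` and `z` in `cd` closes the induced 4-cycle `y a z q`
  have hC4 : ∀ q, q ≠ a → ¬G.Adj a q → G.Adj y q → G.Adj z q → False := fun q qa haq hyq hzq =>
    h4 y a z q ⟨hya, hza.symm, hzq, hyq.symm, hyz', haq, hyz, qa.symm⟩
  -- otherwise `y a z q' q` is an induced 5-cycle
  have hC5 : ∀ q q', G.Adj y q → G.Adj z q' → G.Adj q' q → ¬G.Adj a q → ¬G.Adj a q' →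
      q ≠ a → q' ≠ a → z ≠ q → q' ≠ y → False := fun q q' hyq hzq' hq'q haq haq' qa q'a zq q'y => by
    by_cases hyq' : G.Adj y q'
    · exact hC4 q' q'a haq' hyq' hzq'
    by_cases hzq : G.Adj z q
    · exact hC4 q qa haq hyq hzq
    exact (IsInducedC5.not_contractionsSplit (a := y) (b := a) (c := z) (d := q') (e := q)
      ⟨hya, hza.symm, hzq', hq'q, hyq.symm, hyz', haq', hzq, fun h => hyq' h.symm,
        fun h => haq h.symm, hyz, q'a.symm, zq, q'y, qa⟩) hG
  rcases hy with hyc | hyd <;> rcases hz with hzc | hzd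
  · exact hC4 c ac.symm hac hyc hzc
  · exact hC5 c d hyc hzd hcd.symm hac had ac.symm ad.symm zc yd.symm
  · exact hC5 d c hyd hzc hcd had hac ad.symm ac.symm zd yc.symm
  · exact hC4 d ad.symm had hyd hzd

lemma IsInduced2K2.eq_of_ne (hconn : G.Connected) (ya : y ≠ a) (yb : y ≠ b) (yc : y ≠ c)
    (yd : y ≠ d) (za : z ≠ a) (zb : z ≠ b) (zc : z ≠ c) (zd : z ≠ d) : y = z := by
  by_contra hyz
  have ha := h.not_adj_of_adj hG h4 hconn ya yb yc yd za zb zc zd hyz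
  have hb := h.swap_left.not_adj_of_adj hG h4 hconn yb ya yc yd zb za zc zd hyz
  have hc := h.symm.not_adj_of_adj hG h4 hconn yc yd ya yb zc zd za zb hyz
  have hd := h.symm.swap_left.not_adj_of_adj hG h4 hconn yd yc ya yb zd zc za zb hyz
  have hy := h.adj_or_adj hG hconn ya yb yc yd
  have hz := h.adj_or_adj hG hconn za zb zc zd
  have hab : (G.Adj y a ∧ ¬G.Adj z a ∧ G.Adj z b) ∨ (G.Adj y b ∧ G.Adj z a ∧ ¬G.Adj z b) := by
    rcases hy.1 with hya | hyb
    · exact Or.inl ⟨hya, ha hya, hz.1.resolve_left (ha hya)⟩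
    · exact Or.inr ⟨hyb, hz.1.resolve_right (hb hyb), hb hyb⟩
  have hcd : (G.Adj y c ∧ ¬G.Adj y d ∧ ¬G.Adj z c ∧ G.Adj z d) ∨
      (¬G.Adj y c ∧ G.Adj y d ∧ G.Adj z c ∧ ¬G.Adj z d) := by
    rcases hy.2 with hyc | hyd
    · have hzd := hz.2.resolve_left (hc hyc)
      exact Or.inl ⟨hyc, fun hyd => hd hyd hzd, hc hyc, hzd⟩
    · have hzc := hz.2.resolve_right (hd hyd)
      exact Or.inr ⟨fun hyc => hc hyc hzc, hyd, hzc, hd hyd⟩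
  rcases hab with ⟨hya, hza, hzb⟩ | ⟨hyb, hza, hzb⟩ <;>
    rcases hcd with ⟨hyc, hyd, hzc, hzd⟩ | ⟨hyc, hyd, hzc, hzd⟩
  · exact h.false_of_adj_of_adj hG ya yb yc yd za zb zc zd hya hyc hyd hza hzb hzc hzd
  · exact h.swap_right.false_of_adj_of_adj hG ya yb yd yc za zb zd zc hya hyd hyc hza hzb hzd hzc
  · exact h.swap_left.false_of_adj_of_adj hG yb ya yc yd zb za zc zd hyb hyc hyd hzb hza hzc hzd
  · exact h.swap_left.swap_right.false_of_adj_of_adj hG yb ya yd yc zb za zd zc hyb hyd hyc hzb hza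
      hzd hzc

theorem IsInduced2K2.isExceptional (hconn : G.Connected) : IsExceptional G := by
  obtain ⟨y, ya, yb, yc, yd⟩ := h.exists_ne hconn
  have hcov : ∀ w, w = a ∨ w = b ∨ w = c ∨ w = d ∨ w = y := fun w => by
    by_contra! ⟨wa, wb, wc, wd, wy⟩
    exact wy (h.eq_of_ne hG h4 hconn wa wb wc wd ya yb yc yd)
  obtain ⟨hya | hyb, hyc | hyd⟩ := h.adj_or_adj hG hconn ya yb yc yd
  · exact h.isExceptional_of_adj_of_adj hcov yb yd hya hyc
  · exact h.swap_right.isExceptional_of_adj_of_adj (fun w => by have := hcov w; tauto) yb yc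
      hya hyd
  · exact h.swap_left.isExceptional_of_adj_of_adj (fun w => by have := hcov w; tauto) ya yd
      hyb hyc
  · exact h.swap_left.swap_right.isExceptional_of_adj_of_adj (fun w => by have := hcov w; tauto)
      ya yc hyb hyd

end Induced2K2

end SimpleGraph

theorem stmt7_general {V : Type*} [Fintype V] (G : SimpleGraph V)
    (hG : G.Connected) (hexc : ¬ IsExceptional G) :
    G.IsSplit ↔ ∀ u v : V, G.Adj u v → (G.contractEdge u v).IsSplit := by
  refine ⟨fun h u v huv => h.contractEdge huv, fun hcon => ?_⟩
  have h4 : ∀ a b c d, ¬G.IsInducedC4 a b c d := fun a b c d hC =>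
    hexc (hC.isExceptional hcon hG)
  exact isSplit_of_forall_not_isInduced h4
    (fun a b c d h2 => hexc (h2.isExceptional hcon h4 hG))
    (fun a b c d e h5 => h5.not_contractionsSplit hcon)

/-- Theorem 9. A connected graph `G` not isomorphic to any
exceptional graph is split iff every edge contraction of `G` is split. -/
theorem stmt7 {V : Type*} [Fintype V] [DecidableEq V] (G : SimpleGraph V)
    (hG : G.Connected) (hexc : ¬ IsExceptional G) :
    G.IsSplit ↔ ∀ u v : V, G.Adj u v → (G.contractEdge u v).IsSplit :=
  stmt7_general G hG hexc
end

section
/- If G is a 2K_2-free simple graph, then for every edge e ∈ E(G), the contraction G/e is 2K_2-free. -/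
open SimpleGraph

/-! A `2K₂` in `G / uv` lifts to `G`: every vertex of `2K₂` lies on exactly one edge, so each
vertex `x` of the contraction can be replaced by whichever vertex of its fibre (`{u, v}` if
`x = u`, `{x}` otherwise) realises the edge through `x`, while a non-edge of the contraction means
no edge of `G` between the two fibres. -/

namespace SimpleGraph

variable {V : Type*} {G : SimpleGraph V}

theorem hasInduced_iff_isIndContained {W : Type*} {H : SimpleGraph W} :
    G.HasInduced H ↔ H ⊴ G := by
  rw [isIndContained_iff_exists_iso_induce]
  exact exists_congr fun _ ↦ ⟨fun ⟨e⟩ ↦ ⟨e.symm⟩, fun ⟨e⟩ ↦ ⟨e.symm⟩⟩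

theorem twoK2_adj_iff {i j : Fin 4} :
    twoK2.Adj i j ↔ i = 0 ∧ j = 1 ∨ i = 1 ∧ j = 0 ∨ i = 2 ∧ j = 3 ∨ i = 3 ∧ j = 2 := by
  fin_cases i <;> fin_cases j <;> simp [twoK2]

/-- Distinctness of the four vertices is automatic: e.g. `a ≠ c` since `c ~ d` but `a ≁ d`. -/
theorem twoK2_isIndContained_iff : twoK2 ⊴ G ↔ ∃ a b c d : V,
    G.Adj a b ∧ G.Adj c d ∧ ¬G.Adj a c ∧ ¬G.Adj a d ∧ ¬G.Adj b c ∧ ¬G.Adj b d := by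
  rw [isIndContained_iff_exists_comap_eq]
  constructor
  · rintro ⟨f, hf⟩
    have hadj (i j : Fin 4) : G.Adj (f i) (f j) ↔ twoK2.Adj i j := by rw [← hf]; rfl
    refine ⟨f 0, f 1, f 2, f 3, ?_⟩
    simp only [hadj, twoK2_adj_iff]
    decide
  · rintro ⟨a, b, c, d, hab, hcd, hac, had, hbc, hbd⟩
    have := hab.ne; have := hcd.ne
    have := ne_of_adj_of_not_adj _ hcd had; have := ne_of_adj_of_not_adj _ hcd hbd
    have := ne_of_adj_of_not_adj _ hcd.symm hac; have := ne_of_adj_of_not_adj _ hcd.symm hbc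
    have hinj : Function.Injective ![a, b, c, d] := by
      intro i j h
      fin_cases i <;> fin_cases j <;> simp_all
    refine ⟨⟨_, hinj⟩, ?_⟩
    ext i j
    change G.Adj (![a, b, c, d] i) (![a, b, c, d] j) ↔ _
    fin_cases i <;> fin_cases j <;> simp [twoK2_adj_iff, G.adj_comm, *]

def contractEdgeFiber (u v : V) (x : {x : V // x ≠ v}) : Set V :=
  {y | y = x.1 ∨ x.1 = u ∧ y = v}

variable {u v : V} {x y : {x : V // x ≠ v}}

theorem exists_adj_of_contractEdge_adj (h : (G.contractEdge u v).Adj x y) :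
    ∃ x' ∈ contractEdgeFiber u v x, ∃ y' ∈ contractEdgeFiber u v y, G.Adj x' y' := by
  obtain ⟨-, h | ⟨hx, h⟩ | ⟨hy, h⟩⟩ := h
  · exact ⟨x, Or.inl rfl, y, Or.inl rfl, h⟩
  · exact ⟨v, Or.inr ⟨hx, rfl⟩, y, Or.inl rfl, h⟩
  · exact ⟨x, Or.inl rfl, v, Or.inr ⟨hy, rfl⟩, h.symm⟩

theorem not_adj_of_not_contractEdge_adj (h : ¬(G.contractEdge u v).Adj x y) (hne : x ≠ y)
    {x' y' : V} (hx' : x' ∈ contractEdgeFiber u v x) (hy' : y' ∈ contractEdgeFiber u v y) :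
    ¬G.Adj x' y' := by
  intro hadj
  refine h ⟨hne, ?_⟩
  rcases hx' with rfl | ⟨hx, rfl⟩ <;> rcases hy' with rfl | ⟨hy, rfl⟩
  · exact Or.inl hadj
  · exact Or.inr (Or.inr ⟨hy, hadj.symm⟩)
  · exact Or.inr (Or.inl ⟨hx, hadj⟩)
  · exact (G.irrefl hadj).elim

theorem twoK2_isIndContained_of_contractEdge (h : twoK2 ⊴ G.contractEdge u v) : twoK2 ⊴ G := by
  rw [twoK2_isIndContained_iff] at h ⊢
  obtain ⟨a, b, c, d, hab, hcd, hac, had, hbc, hbd⟩ := h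
  obtain ⟨a', ha', b', hb', hab'⟩ := exists_adj_of_contractEdge_adj hab
  obtain ⟨c', hc', d', hd', hcd'⟩ := exists_adj_of_contractEdge_adj hcd
  exact ⟨a', b', c', d', hab', hcd',
    not_adj_of_not_contractEdge_adj hac (ne_of_adj_of_not_adj _ hcd had).symm ha' hc',
    not_adj_of_not_contractEdge_adj had (ne_of_adj_of_not_adj _ hcd.symm hac).symm ha' hd',
    not_adj_of_not_contractEdge_adj hbc (ne_of_adj_of_not_adj _ hcd hbd).symm hb' hc',
    not_adj_of_not_contractEdge_adj hbd (ne_of_adj_of_not_adj _ hcd.symm hbc).symm hb' hd'⟩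

end SimpleGraph

theorem stmt10_general {V : Type*} (G : SimpleGraph V)
    (h2K2 : ¬ G.HasInduced twoK2) :
    ∀ u v : V, G.Adj u v → ¬ (G.contractEdge u v).HasInduced twoK2 := by
  intro u v _ h
  rw [hasInduced_iff_isIndContained] at h2K2 h
  exact h2K2 (twoK2_isIndContained_of_contractEdge h)

/-- Claim 12.5. Edge contraction preserves `2K₂`-freeness. -/
theorem stmt10 {V : Type*} [Fintype V] [DecidableEq V] (G : SimpleGraph V)
    (h2K2 : ¬ G.HasInduced twoK2) :
    ∀ u v : V, G.Adj u v → ¬ (G.contractEdge u v).HasInduced twoK2 :=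
  stmt10_general G h2K2
end

section
/- Let G be a connected (2K_2, claw)-free simple graph and let C ⊆ V(G) be a vertex set inducing a 4-cycle in G. If S is an independent set in G with |S| ≥ 3, then S ∩ C = ∅. -/
/-! Let `s = c₀` lie on an induced square `c₀c₁c₂c₃`. Every vertex `x` has a neighbour on
the square: otherwise a neighbour `w` of `x` (which exists by connectivity) meets every edge of
the square, as `G` is `2K₂`-free, hence two opposite corners, and these with `x` are a claw at
`w`. By claw-freeness at `c₁`, `c₃` and `c₂`, every non-neighbour `x ≠ c₀` of `c₀` is then
adjacent to `c₂` and to `c₁` or `c₃`. Two such non-neighbours are adjacent: a common neighbour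
`c₁` or `c₃` would be the centre of a claw with `c₀`, and otherwise they span a `2K₂` with
`c₁` and `c₃`. So an independent set containing `c₀` has at most two vertices. -/

open SimpleGraph

/-- The claw `K_{1,3}`. -/
def clawGraph : SimpleGraph (Fin 4) := fromEdgeSet {s(0,1), s(0,2), s(0,3)}

namespace SimpleGraph

variable {V W : Type*} {G : SimpleGraph V}

theorem hasInduced_of_injective {H : SimpleGraph W} (f : W → V) (hf : f.Injective)
    (hadj : ∀ i j, G.Adj (f i) (f j) ↔ H.Adj i j) : G.HasInduced H :=
  ⟨Set.range f, ⟨(Embedding.isoInduceRange ⟨⟨f, hf⟩, hadj _ _⟩).symm⟩⟩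

theorem adj_of_not_hasInduced_clawGraph (hclaw : ¬ G.HasInduced clawGraph) {w x y z : V}
    (hx : G.Adj w x) (hy : G.Adj w y) (hz : G.Adj w z) (hxy : x ≠ y) (hxz : x ≠ z)
    (hyz : y ≠ z) : G.Adj x y ∨ G.Adj x z ∨ G.Adj y z := by
  by_contra! h
  obtain ⟨h₁, h₂, h₃⟩ := h
  have := hx.ne; have := hy.ne; have := hz.ne
  refine hclaw (hasInduced_of_injective ![w, x, y, z] (fun i j hij => ?_) fun i j => ?_)
  · fin_cases i <;> fin_cases j <;> simp_all
  · fin_cases i <;> fin_cases j <;> simp_all [clawGraph, G.adj_comm]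

theorem adj_of_not_hasInduced_twoK2 (h2K2 : ¬ G.HasInduced twoK2) {x y u v : V}
    (hxy : G.Adj x y) (huv : G.Adj u v) (hxu : x ≠ u) (hxv : x ≠ v) (hyu : y ≠ u)
    (hyv : y ≠ v) : G.Adj x u ∨ G.Adj x v ∨ G.Adj y u ∨ G.Adj y v := by
  by_contra! h
  obtain ⟨h₁, h₂, h₃, h₄⟩ := h
  have := hxy.ne; have := huv.ne
  refine h2K2 (hasInduced_of_injective ![x, y, u, v] (fun i j hij => ?_) fun i j => ?_)
  · fin_cases i <;> fin_cases j <;> simp_all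
  · fin_cases i <;> fin_cases j <;> simp_all [twoK2, G.adj_comm]

structure IsInducedSquare (G : SimpleGraph V) (c₀ c₁ c₂ c₃ : V) : Prop where
  adj₀₁ : G.Adj c₀ c₁
  adj₁₂ : G.Adj c₁ c₂
  adj₂₃ : G.Adj c₂ c₃
  adj₃₀ : G.Adj c₃ c₀
  not_adj₀₂ : ¬ G.Adj c₀ c₂
  not_adj₁₃ : ¬ G.Adj c₁ c₃
  ne₀₂ : c₀ ≠ c₂
  ne₁₃ : c₁ ≠ c₃

theorem isInducedSquare_of_iso {C : Set V} (e : G.induce C ≃g cycleGraph 4) (k : Fin 4) :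
    G.IsInducedSquare (e.symm k) (e.symm (k + 1)) (e.symm (k + 2)) (e.symm (k + 3)) := by
  have hadj (i j : Fin 4) : G.Adj (e.symm i) (e.symm j) ↔ (cycleGraph 4).Adj i j :=
    e.symm.map_adj_iff
  have hne (i j : Fin 4) (h : i ≠ j) : (e.symm i : V) ≠ e.symm j :=
    fun h' => h (e.symm.injective (Subtype.ext h'))
  constructor <;> first
    | rw [hadj]; fin_cases k <;> decide
    | apply hne; fin_cases k <;> decide

theorem exists_isInducedSquare_of_iso {C : Set V} (e : G.induce C ≃g cycleGraph 4) {s : V}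
    (hs : s ∈ C) : ∃ c₁ c₂ c₃, G.IsInducedSquare s c₁ c₂ c₃ := by
  have hsq := isInducedSquare_of_iso e (e ⟨s, hs⟩)
  rw [e.symm_apply_apply] at hsq
  exact ⟨_, _, _, hsq⟩

namespace IsInducedSquare

variable {c₀ c₁ c₂ c₃ : V}

theorem reflect (hsq : G.IsInducedSquare c₀ c₁ c₂ c₃) : G.IsInducedSquare c₀ c₃ c₂ c₁ :=
  ⟨hsq.adj₃₀.symm, hsq.adj₂₃.symm, hsq.adj₁₂.symm, hsq.adj₀₁.symm, hsq.not_adj₀₂,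
    fun h => hsq.not_adj₁₃ h.symm, hsq.ne₀₂, hsq.ne₁₃.symm⟩

theorem exists_adj (hsq : G.IsInducedSquare c₀ c₁ c₂ c₃) (hG : G.Connected)
    (h2K2 : ¬ G.HasInduced twoK2) (hclaw : ¬ G.HasInduced clawGraph) (x : V) :
    G.Adj x c₀ ∨ G.Adj x c₁ ∨ G.Adj x c₂ ∨ G.Adj x c₃ := by
  by_contra! hx
  obtain ⟨h₀, h₁, h₂, h₃⟩ := hx
  have := hsq.adj₀₁.nontrivial
  obtain ⟨w, hxw⟩ := hG.preconnected.exists_adj_of_nontrivial x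
  have hx₀ : x ≠ c₀ := by rintro rfl; exact h₁ hsq.adj₀₁
  have hx₁ : x ≠ c₁ := by rintro rfl; exact h₂ hsq.adj₁₂
  have hx₂ : x ≠ c₂ := by rintro rfl; exact h₃ hsq.adj₂₃
  have hx₃ : x ≠ c₃ := by rintro rfl; exact h₀ hsq.adj₃₀
  have hw (c : V) (h : ¬ G.Adj x c) : w ≠ c := by rintro rfl; exact h hxw
  have e₀₁ := adj_of_not_hasInduced_twoK2 h2K2 hxw hsq.adj₀₁ hx₀ hx₁ (hw _ h₀) (hw _ h₁)
  have e₁₂ := adj_of_not_hasInduced_twoK2 h2K2 hxw hsq.adj₁₂ hx₁ hx₂ (hw _ h₁) (hw _ h₂)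
  have e₂₃ := adj_of_not_hasInduced_twoK2 h2K2 hxw hsq.adj₂₃ hx₂ hx₃ (hw _ h₂) (hw _ h₃)
  have e₃₀ := adj_of_not_hasInduced_twoK2 h2K2 hxw hsq.adj₃₀ hx₃ hx₀ (hw _ h₃) (hw _ h₀)
  simp only [h₀, h₁, h₂, h₃, false_or] at e₀₁ e₁₂ e₂₃ e₃₀
  have hopp : (G.Adj w c₀ ∧ G.Adj w c₂) ∨ (G.Adj w c₁ ∧ G.Adj w c₃) := by tauto
  rcases hopp with ⟨hw₀, hw₂⟩ | ⟨hw₁, hw₃⟩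
  · rcases adj_of_not_hasInduced_clawGraph hclaw hxw.symm hw₀ hw₂ hx₀ hx₂ hsq.ne₀₂ with h | h | h
    exacts [h₀ h, h₂ h, hsq.not_adj₀₂ h]
  · rcases adj_of_not_hasInduced_clawGraph hclaw hxw.symm hw₁ hw₃ hx₁ hx₃ hsq.ne₁₃ with h | h | h
    exacts [h₁ h, h₃ h, hsq.not_adj₁₃ h]

theorem adj₂_of_adj₁ (hsq : G.IsInducedSquare c₀ c₁ c₂ c₃) (hclaw : ¬ G.HasInduced clawGraph)
    {x : V} (hx₀ : x ≠ c₀) (hx₂ : x ≠ c₂) (h₀ : ¬ G.Adj x c₀) (h₁ : G.Adj x c₁) :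
    G.Adj x c₂ := by
  rcases adj_of_not_hasInduced_clawGraph hclaw hsq.adj₀₁.symm hsq.adj₁₂ h₁.symm hsq.ne₀₂
    hx₀.symm hx₂.symm with h | h | h
  exacts [absurd h hsq.not_adj₀₂, absurd h.symm h₀, h.symm]

theorem adj₂_of_not_adj₀ (hsq : G.IsInducedSquare c₀ c₁ c₂ c₃) (hG : G.Connected)
    (h2K2 : ¬ G.HasInduced twoK2) (hclaw : ¬ G.HasInduced clawGraph) {x : V} (hx₀ : x ≠ c₀)
    (hx₂ : x ≠ c₂) (h₀ : ¬ G.Adj x c₀) : G.Adj x c₂ := by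
  rcases hsq.exists_adj hG h2K2 hclaw x with h | h | h | h
  · exact absurd h h₀
  · exact hsq.adj₂_of_adj₁ hclaw hx₀ hx₂ h₀ h
  · exact h
  · exact hsq.reflect.adj₂_of_adj₁ hclaw hx₀ hx₂ h₀ h

theorem adj₁_or_adj₃_of_adj₂ (hsq : G.IsInducedSquare c₀ c₁ c₂ c₃)
    (hclaw : ¬ G.HasInduced clawGraph) {x : V} (hx₁ : x ≠ c₁) (hx₃ : x ≠ c₃) (h₂ : G.Adj x c₂) :
    G.Adj x c₁ ∨ G.Adj x c₃ := by
  rcases adj_of_not_hasInduced_clawGraph hclaw hsq.adj₁₂.symm hsq.adj₂₃ h₂.symm hsq.ne₁₃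
    hx₁.symm hx₃.symm with h | h | h
  exacts [absurd h hsq.not_adj₁₃, Or.inl h.symm, Or.inr h.symm]

theorem isClique_setOf_not_adj (hsq : G.IsInducedSquare c₀ c₁ c₂ c₃) (hG : G.Connected)
    (h2K2 : ¬ G.HasInduced twoK2) (hclaw : ¬ G.HasInduced clawGraph) :
    G.IsClique {x | x ≠ c₀ ∧ ¬ G.Adj x c₀} := by
  rintro a ⟨ha, ha₀⟩ b ⟨hb, hb₀⟩ hab
  have ne_of_not_adj {x c : V} (hx₀ : ¬ G.Adj x c₀) (hc : G.Adj c c₀) : x ≠ c := by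
    rintro rfl; exact hx₀ hc
  have claw_at {c : V} (hc : G.Adj c c₀) (hac : G.Adj a c) (hbc : G.Adj b c) : G.Adj a b := by
    rcases adj_of_not_hasInduced_clawGraph hclaw hc hac.symm hbc.symm ha.symm hb.symm hab
      with h | h | h
    exacts [absurd h.symm ha₀, absurd h.symm hb₀, h]
  have cross {c c' : V} (hc : G.Adj c c₀) (hc' : G.Adj c' c₀) (hcc' : ¬ G.Adj c c')
      (hne : c ≠ c') (hac : G.Adj a c) (hbc' : G.Adj b c') : G.Adj a b := by
    rcases adj_of_not_hasInduced_twoK2 h2K2 hac hbc' hab (ne_of_not_adj ha₀ hc')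
      (ne_of_not_adj hb₀ hc).symm hne with h | h | h | h
    · exact h
    · exact claw_at hc' h hbc'
    · exact claw_at hc hac h.symm
    · exact absurd h hcc'
  by_cases ha₂ : a = c₂
  · subst ha₂
    exact (hsq.adj₂_of_not_adj₀ hG h2K2 hclaw hb hab.symm hb₀).symm
  by_cases hb₂ : b = c₂
  · subst hb₂
    exact hsq.adj₂_of_not_adj₀ hG h2K2 hclaw ha hab ha₀
  have ha' := hsq.adj₁_or_adj₃_of_adj₂ hclaw (ne_of_not_adj ha₀ hsq.adj₀₁.symm)
    (ne_of_not_adj ha₀ hsq.adj₃₀) (hsq.adj₂_of_not_adj₀ hG h2K2 hclaw ha ha₂ ha₀)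
  have hb' := hsq.adj₁_or_adj₃_of_adj₂ hclaw (ne_of_not_adj hb₀ hsq.adj₀₁.symm)
    (ne_of_not_adj hb₀ hsq.adj₃₀) (hsq.adj₂_of_not_adj₀ hG h2K2 hclaw hb hb₂ hb₀)
  rcases ha' with ha₁ | ha₃ <;> rcases hb' with hb₁ | hb₃
  · exact claw_at hsq.adj₀₁.symm ha₁ hb₁
  · exact cross hsq.adj₀₁.symm hsq.adj₃₀ hsq.not_adj₁₃ hsq.ne₁₃ ha₁ hb₃
  · exact cross hsq.adj₃₀ hsq.adj₀₁.symm (fun h => hsq.not_adj₁₃ h.symm)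
      hsq.ne₁₃.symm ha₃ hb₁
  · exact claw_at hsq.adj₃₀ ha₃ hb₃

end IsInducedSquare

end SimpleGraph

theorem stmt17_general {V : Type*} (G : SimpleGraph V)
    (hG : G.Connected) (h2K2 : ¬ G.HasInduced twoK2) (hclaw : ¬ G.HasInduced clawGraph)
    (C : Set V) (hC : Nonempty (G.induce C ≃g cycleGraph 4))
    (S : Set V) (hS : G.IsIndependentSet S) (hcard : 3 ≤ S.ncard) :
    S ∩ C = ∅ := by
  refine Set.eq_empty_of_forall_notMem fun s ⟨hsS, hsC⟩ => ?_
  obtain ⟨c₁, c₂, c₃, hsq⟩ := exists_isInducedSquare_of_iso hC.some hsC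
  have hcard' : 1 < (S \ {s}).ncard := by
    rw [Set.ncard_sdiff_singleton_of_mem hsS]; omega
  obtain ⟨a, ha, b, hb, hab⟩ := (Set.one_lt_ncard_iff_nontrivial_and_finite.mp hcard').1
  exact hS ha.1 hb.1 hab <| hsq.isClique_setOf_not_adj hG h2K2 hclaw
    ⟨ha.2, hS ha.1 hsS ha.2⟩ ⟨hb.2, hS hb.1 hsS hb.2⟩ hab

/-- Claim 12.11. In a connected `(2K₂, claw)`-free graph, an
independent set of size at least `3` is disjoint from the vertex set of any induced
4-cycle. -/
theorem stmt17 {V : Type*} [Fintype V] [DecidableEq V] (G : SimpleGraph V)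
    (hG : G.Connected) (h2K2 : ¬ G.HasInduced twoK2) (hclaw : ¬ G.HasInduced clawGraph)
    (C : Set V) (hC : Nonempty (G.induce C ≃g cycleGraph 4))
    (S : Set V) (hS : G.IsIndependentSet S) (hcard : 3 ≤ S.ncard) :
    S ∩ C = ∅ :=
  stmt17_general G hG h2K2 hclaw C hC S hS hcard
end
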